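/- arXiv:2205.06063 — 2 statements merged into one kernel-verified Lean document; each statement's English description precedes it below -/
import Mathlib

section
/- Let m ≥ 1 be an integer, λ_B, λ_F > 0, and let G_B, G_F be independent Gamma random variables with shape m and rates λ_B, λ_F respectively, with CDFs F_B, F_F. Let ε1 > 0, ε2 > 0 and ε0 = ε1 + ε2. Then P(ε1 < G_B < ε0 and G_F < ε2·G_B/(G_B − ε1)) = F_B(ε0) − F_B(ε1) − (λ_B^m/Γ(m)) · Σ_{i=0}^{m−1} ((λ_F ε2)^i / i!) · ∫_{ε1}^{ε0} (y^{m+i−1}/(y − ε1)^i) · e^{−λ_B y − λ_F ε2 y/(y − ε1)} dy. -/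
open MeasureTheory ProbabilityTheory

/-- The law of a Gamma random variable with integer shape `m` and rate `l`: the measure on ℝ
with density f(x) = l^m x^(m−1) e^(−lx)/Γ(m) for x > 0 (w.r.t. Lebesgue measure). -/
noncomputable def gammaLaw (m : ℕ) (l : ℝ) : Measure ℝ :=
  volume.withDensity fun x =>
    ENNReal.ofReal
      (if 0 < x then l ^ m * x ^ (m - 1) * Real.exp (-(l * x)) / Real.Gamma m else 0)

/-- The CDF F(x) = 1 − e^(−lx) Σ_{i=0}^{m−1} (lx)^i/i! of a Gamma random variable with integer
shape `m` and rate `l`. -/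
noncomputable def gammaCDF (m : ℕ) (l x : ℝ) : ℝ :=
  1 - Real.exp (-(l * x)) * ∑ i ∈ Finset.range m, (l * x) ^ i / (Nat.factorial i : ℝ)

/-! By independence the joint law of `(G_B, G_F)` is the product of the two Gamma laws, so by
Tonelli the event has probability `∫_{ε1}^{ε0} f_B(x) F_F(ε2 x / (x - ε1)) dx`. Writing
`F_F(y) = 1 - Σ_{i<m} e^{-λ_F y} (λ_F y)^i / i!` splits this into `F_B(ε0) - F_B(ε1)` and the `m`
integrals of the statement. Each Poisson weight `e^{-s} s^i / i!` is at most `1`, which keeps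
these integrands integrable despite the singularity at `x = ε1`. -/

open Set
open scoped Nat

noncomputable def gammaDensity (m : ℕ) (l x : ℝ) : ℝ :=
  l ^ m * x ^ (m - 1) * Real.exp (-(l * x)) / Real.Gamma m

lemma continuous_gammaDensity (m : ℕ) (l : ℝ) : Continuous (gammaDensity m l) := by
  unfold gammaDensity; fun_prop

lemma gammaDensity_nonneg (m : ℕ) {l x : ℝ} (hl : 0 ≤ l) (hx : 0 ≤ x) :
    0 ≤ gammaDensity m l x := by
  have := Real.Gamma_nonneg_of_nonneg (Nat.cast_nonneg (α := ℝ) m)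
  unfold gammaDensity; positivity

lemma gammaLaw_eq_withDensity (m : ℕ) (l : ℝ) :
    gammaLaw m l =
      volume.withDensity ((Ioi 0).indicator fun x => ENNReal.ofReal (gammaDensity m l x)) := by
  unfold gammaLaw
  congr 1; ext x
  by_cases hx : 0 < x <;> simp [hx, gammaDensity]

lemma hasDerivAt_gammaCDF {m : ℕ} (hm : 1 ≤ m) (l t : ℝ) :
    HasDerivAt (gammaCDF m l) (gammaDensity m l t) t := by
  obtain ⟨k, rfl⟩ : ∃ k, m = k + 1 := ⟨m - 1, by omega⟩
  have hlin : HasDerivAt (fun x : ℝ => l * x) l t := by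
    simpa using (hasDerivAt_id t).const_mul l
  have hsum : HasDerivAt (fun x : ℝ => ∑ i ∈ Finset.range (k + 1), (l * x) ^ i / (i ! : ℝ))
      (l * ∑ i ∈ Finset.range k, (l * t) ^ i / (i ! : ℝ)) t := by
    refine (HasDerivAt.fun_sum (u := Finset.range (k + 1)) fun i _ =>
      (hlin.pow i).div_const (i ! : ℝ)).congr_deriv ?_
    rw [Finset.sum_range_succ', Finset.mul_sum]
    simp only [Nat.cast_add, Nat.cast_one, Nat.add_sub_cancel, Nat.factorial_succ, Nat.cast_mul,
      CharP.cast_eq_zero, zero_mul, zero_div, add_zero]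
    refine Finset.sum_congr rfl fun i _ => ?_
    field_simp
  refine ((hlin.neg.exp.mul hsum).const_sub 1).congr_deriv ?_
  rw [gammaDensity, Finset.sum_range_succ, Nat.cast_add_one, Real.Gamma_nat_eq_factorial,
    Nat.add_sub_cancel, Pi.neg_apply]
  field_simp
  ring

lemma integral_gammaDensity {m : ℕ} (hm : 1 ≤ m) (l a b : ℝ) :
    ∫ x in a..b, gammaDensity m l x = gammaCDF m l b - gammaCDF m l a :=
  intervalIntegral.integral_eq_sub_of_hasDerivAt (fun x _ => hasDerivAt_gammaCDF hm l x)
    ((continuous_gammaDensity m l).intervalIntegrable a b)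

lemma gammaCDF_zero {m : ℕ} (hm : 1 ≤ m) (l : ℝ) : gammaCDF m l 0 = 0 := by
  obtain ⟨k, rfl⟩ : ∃ k, m = k + 1 := ⟨m - 1, by omega⟩
  simp [gammaCDF, Finset.sum_range_succ']

lemma gammaCDF_nonneg (m : ℕ) {l x : ℝ} (h : 0 ≤ l * x) : 0 ≤ gammaCDF m l x := by
  have := Real.sum_le_exp_of_nonneg h m
  rw [gammaCDF, sub_nonneg, Real.exp_neg, inv_mul_le_iff₀ (Real.exp_pos _), mul_one]
  exact this

lemma setLIntegral_gammaLaw (m : ℕ) (l : ℝ) {s : Set ℝ} (hs : MeasurableSet s) (hs0 : s ⊆ Ioi 0)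
    {f : ℝ → ENNReal} (hf : Measurable f) :
    ∫⁻ x in s, f x ∂gammaLaw m l = ∫⁻ x in s, ENNReal.ofReal (gammaDensity m l x) * f x := by
  have hd : Measurable ((Ioi (0 : ℝ)).indicator fun x => ENNReal.ofReal (gammaDensity m l x)) :=
    (continuous_gammaDensity m l).measurable.ennreal_ofReal.indicator measurableSet_Ioi
  rw [gammaLaw_eq_withDensity, setLIntegral_withDensity_eq_setLIntegral_mul _ hd hf hs]
  exact setLIntegral_congr_fun hs fun x hx => by simp [indicator_of_mem (hs0 hx)]

lemma toReal_setLIntegral_gammaLaw (m : ℕ) {l : ℝ} (hl : 0 ≤ l) {s : Set ℝ}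
    (hs : MeasurableSet s) (hs0 : s ⊆ Ioi 0) {f : ℝ → ℝ} (hf : Measurable f)
    (hf0 : ∀ x ∈ s, 0 ≤ f x) :
    (∫⁻ x in s, ENNReal.ofReal (f x) ∂gammaLaw m l).toReal =
      ∫ x in s, gammaDensity m l x * f x := by
  have hnn : ∀ x ∈ s, 0 ≤ gammaDensity m l x := fun x hx =>
    gammaDensity_nonneg m hl (le_of_lt (hs0 hx))
  rw [setLIntegral_gammaLaw m l hs hs0 hf.ennreal_ofReal, integral_eq_lintegral_of_nonneg_ae
    ((ae_restrict_iff' hs).2 (ae_of_all _ fun x hx => mul_nonneg (hnn x hx) (hf0 x hx)))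
    ((continuous_gammaDensity m l).measurable.mul hf).aestronglyMeasurable]
  congr 1
  exact setLIntegral_congr_fun hs fun x hx => (ENNReal.ofReal_mul (hnn x hx)).symm

lemma gammaLaw_Iio {m : ℕ} (hm : 1 ≤ m) {l : ℝ} (hl : 0 ≤ l) {t : ℝ} (ht : 0 ≤ t) :
    gammaLaw m l (Iio t) = ENNReal.ofReal (gammaCDF m l t) := by
  rw [gammaLaw_eq_withDensity, withDensity_apply _ measurableSet_Iio,
    setLIntegral_indicator measurableSet_Ioi, Ioi_inter_Iio, ← ofReal_integral_eq_lintegral_ofReal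
      ((continuous_gammaDensity m l).integrableOn_Icc.mono_set Ioo_subset_Icc_self)
      ((ae_restrict_iff' measurableSet_Ioo).2 (ae_of_all _ fun x hx =>
        gammaDensity_nonneg m hl hx.1.le)),
    ← integral_Ioc_eq_integral_Ioo, ← intervalIntegral.integral_of_le ht,
    integral_gammaDensity hm, gammaCDF_zero hm, sub_zero]

lemma ProbabilityTheory.IndepFun.measure_mem_and_lt {Ω α : Type*} [MeasurableSpace Ω]
    [MeasurableSpace α] {P : Measure Ω} [IsFiniteMeasure P] {X : Ω → α} {Y : Ω → ℝ}
    (hX : Measurable X) (hY : Measurable Y) (hXY : IndepFun X Y P) {A : Set α}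
    (hA : MeasurableSet A) {g : α → ℝ} (hg : Measurable g) :
    P {ω | X ω ∈ A ∧ Y ω < g (X ω)} = ∫⁻ x in A, P.map Y (Iio (g x)) ∂P.map X := by
  set S := {p : α × ℝ | p.1 ∈ A ∧ p.2 < g p.1}
  have hS : MeasurableSet S :=
    (measurable_fst hA).inter (measurableSet_lt measurable_snd (hg.comp measurable_fst))
  calc P {ω | X ω ∈ A ∧ Y ω < g (X ω)} = P.map (fun ω => (X ω, Y ω)) S :=
        (Measure.map_apply (hX.prodMk hY) hS).symm
    _ = (P.map X).prod (P.map Y) S := by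
        rw [(indepFun_iff_map_prod_eq_prod_map_map hX.aemeasurable hY.aemeasurable).1 hXY]
    _ = ∫⁻ x, A.indicator (fun x => P.map Y (Iio (g x))) x ∂P.map X := by
        rw [Measure.prod_apply hS]
        congr 1; ext x
        by_cases hx : x ∈ A
        · simp [S, hx, Iio]
        · simp [S, hx]
    _ = _ := lintegral_indicator hA _

lemma exp_neg_mul_pow_div_factorial_le_one {s : ℝ} (hs : 0 ≤ s) (i : ℕ) :
    Real.exp (-s) * s ^ i / i ! ≤ 1 := by
  rw [mul_div_assoc, Real.exp_neg, inv_mul_le_iff₀ (Real.exp_pos s), mul_one]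
  exact Real.pow_div_factorial_le_exp _ hs i

lemma gammaDensity_mul_poisson_eq {m : ℕ} (hm : 1 ≤ m) (i : ℕ) (lB lF ε1 ε2 : ℝ) {x : ℝ}
    (hx : x ≠ ε1) :
    gammaDensity m lB x *
        (Real.exp (-(lF * (ε2 * x / (x - ε1)))) * (lF * (ε2 * x / (x - ε1))) ^ i / i !) =
      lB ^ m / Real.Gamma m * ((lF * ε2) ^ i / i ! *
        (x ^ (m + i - 1) / (x - ε1) ^ i * Real.exp (-(lB * x) - lF * ε2 * x / (x - ε1)))) := by
  have hx' : x - ε1 ≠ 0 := sub_ne_zero.2 hx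
  have hexp : -(lB * x) - lF * ε2 * x / (x - ε1) = -(lB * x) + -(lF * (ε2 * x / (x - ε1))) := by
    ring
  rw [gammaDensity, show m + i - 1 = m - 1 + i by omega, pow_add, hexp, Real.exp_add,
    mul_pow, div_pow]
  field_simp
  ring

lemma integral_gammaDensity_mul_gammaCDF {m : ℕ} (hm : 1 ≤ m) {lB lF ε1 ε2 : ℝ} (hlF : 0 ≤ lF)
    (hε1 : 0 ≤ ε1) (hε2 : 0 ≤ ε2) :
    ∫ x in Ioo ε1 (ε1 + ε2), gammaDensity m lB x * gammaCDF m lF (ε2 * x / (x - ε1)) =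
      gammaCDF m lB (ε1 + ε2) - gammaCDF m lB ε1 -
        lB ^ m / Real.Gamma m *
          ∑ i ∈ Finset.range m,
            (lF * ε2) ^ i / (Nat.factorial i : ℝ) *
              ∫ y in ε1..(ε1 + ε2),
                y ^ (m + i - 1) / (y - ε1) ^ i *
                  Real.exp (-(lB * y) - lF * ε2 * y / (y - ε1)) := by
  set I := Ioo ε1 (ε1 + ε2)
  set s : ℝ → ℝ := fun x => lF * (ε2 * x / (x - ε1))
  set q : ℕ → ℝ → ℝ := fun i x => gammaDensity m lB x * (Real.exp (-s x) * s x ^ i / i !)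
  have hI : ε1 ≤ ε1 + ε2 := le_add_of_nonneg_right hε2
  have hfB : IntegrableOn (gammaDensity m lB) I :=
    (continuous_gammaDensity m lB).integrableOn_Icc.mono_set Ioo_subset_Icc_self
  have hq : ∀ i, IntegrableOn (q i) I := by
    intro i
    refine hfB.norm.mono'
      ((continuous_gammaDensity m lB).measurable.mul (by fun_prop)).aestronglyMeasurable
      ((ae_restrict_iff' measurableSet_Ioo).2 (ae_of_all _ fun x hx => ?_))
    have hs : 0 ≤ s x := mul_nonneg hlF
      (div_nonneg (mul_nonneg hε2 (hε1.trans hx.1.le)) (sub_nonneg.2 hx.1.le))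
    rw [norm_mul]
    refine mul_le_of_le_one_right (norm_nonneg _) ?_
    rw [Real.norm_of_nonneg (by positivity)]
    exact exp_neg_mul_pow_div_factorial_le_one hs i
  calc ∫ x in I, gammaDensity m lB x * gammaCDF m lF (ε2 * x / (x - ε1))
      = ∫ x in I, (gammaDensity m lB x - ∑ i ∈ Finset.range m, q i x) := by
        simp only [q, s, gammaCDF, mul_sub, mul_one, Finset.mul_sum, mul_div_assoc]
    _ = (∫ x in I, gammaDensity m lB x) - ∑ i ∈ Finset.range m, ∫ x in I, q i x := by
        rw [integral_sub hfB (integrable_finsetSum _ fun i _ => hq i),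
          integral_finsetSum _ fun i _ => hq i]
    _ = _ := by
        rw [← integral_Ioc_eq_integral_Ioo, ← intervalIntegral.integral_of_le hI,
          integral_gammaDensity hm, Finset.mul_sum]
        congr 1
        refine Finset.sum_congr rfl fun i _ => ?_
        rw [intervalIntegral.integral_of_le hI, integral_Ioc_eq_integral_Ioo,
          ← integral_const_mul, ← integral_const_mul]
        exact setIntegral_congr_fun measurableSet_Ioo fun x hx =>
          gammaDensity_mul_poisson_eq hm i lB lF ε1 ε2 hx.1.ne'

/-- Let m ≥ 1 be an integer, λ_B, λ_F > 0, and let G_B, G_F be independent Gamma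
random variables with shape m and rates λ_B, λ_F respectively, with CDFs F_B, F_F. Let ε1 > 0,
ε2 > 0 and ε0 = ε1 + ε2. Then
P(ε1 < G_B < ε0 and G_F < ε2·G_B/(G_B − ε1))
  = F_B(ε0) − F_B(ε1) − (λ_B^m/Γ(m)) Σ_{i=0}^{m−1} ((λ_F ε2)^i/i!)
      ∫_{ε1}^{ε0} y^{m+i−1}/(y − ε1)^i · e^{−λ_B y − λ_F ε2 y/(y − ε1)} dy. -/
theorem stmt_11 {Ω : Type*} [MeasurableSpace Ω] (P : Measure Ω) [IsProbabilityMeasure P]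
    (m : ℕ) (hm : 1 ≤ m) (lB lF : ℝ) (hlB : 0 < lB) (hlF : 0 < lF)
    (GB GF : Ω → ℝ) (hGB : Measurable GB) (hGF : Measurable GF)
    (hBlaw : P.map GB = gammaLaw m lB) (hFlaw : P.map GF = gammaLaw m lF)
    (hindep : IndepFun GB GF P)
    (ε1 ε2 : ℝ) (hε1 : 0 < ε1) (hε2 : 0 < ε2) :
    (P {ω | ε1 < GB ω ∧ GB ω < ε1 + ε2 ∧ GF ω < ε2 * GB ω / (GB ω - ε1)}).toReal =
      gammaCDF m lB (ε1 + ε2) - gammaCDF m lB ε1 -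
        lB ^ m / Real.Gamma m *
          ∑ i ∈ Finset.range m,
            (lF * ε2) ^ i / (Nat.factorial i : ℝ) *
              ∫ y in ε1..(ε1 + ε2),
                y ^ (m + i - 1) / (y - ε1) ^ i *
                  Real.exp (-(lB * y) - lF * ε2 * y / (y - ε1)) := by
  set I := Ioo ε1 (ε1 + ε2)
  have hg0 : ∀ x ∈ I, 0 ≤ ε2 * x / (x - ε1) := fun x hx =>
    div_nonneg (mul_nonneg hε2.le (hε1.trans hx.1).le) (sub_nonneg.2 hx.1.le)
  have hevent : {ω | ε1 < GB ω ∧ GB ω < ε1 + ε2 ∧ GF ω < ε2 * GB ω / (GB ω - ε1)} =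
      {ω | GB ω ∈ I ∧ GF ω < ε2 * GB ω / (GB ω - ε1)} := by
    ext ω; simp [I, and_assoc]
  calc (P {ω | ε1 < GB ω ∧ GB ω < ε1 + ε2 ∧ GF ω < ε2 * GB ω / (GB ω - ε1)}).toReal
      = (∫⁻ x in I, ENNReal.ofReal (gammaCDF m lF (ε2 * x / (x - ε1))) ∂gammaLaw m lB).toReal := by
        rw [hevent, hindep.measure_mem_and_lt hGB hGF (A := I) measurableSet_Ioo
          (g := fun x => ε2 * x / (x - ε1)) (by fun_prop), hBlaw, hFlaw]
        congr 1
        exact setLIntegral_congr_fun measurableSet_Ioo fun x hx =>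
          gammaLaw_Iio hm hlF.le (hg0 x hx)
    _ = ∫ x in I, gammaDensity m lB x * gammaCDF m lF (ε2 * x / (x - ε1)) :=
        toReal_setLIntegral_gammaLaw m hlB.le measurableSet_Ioo (fun x hx => hε1.trans hx.1)
          (by unfold gammaCDF; fun_prop) fun x hx =>
            gammaCDF_nonneg m (mul_nonneg hlF.le (hg0 x hx))
    _ = _ := integral_gammaDensity_mul_gammaCDF hm hlF.le hε1.le hε2.le
end

section
/- Assume ρ > 0, Θ_B > 1 and Θ_th > Θ_B/(Θ_B − 1). With ε1 = (Θ_B − 1)/ρ, ε2 = Θ_B(Θ_th − 1)/ρ, ε0 = ε1 + ε2, and the FPA grant-free rate R_F(g_B, g_F) defined below, the following holds for independent Gamma random variables G_B, G_F with integer shape m ≥ 1 and rates λ_B, λ_F > 0: P(G_B ≤ ε1) + P(G_B > ε1 and R_F(G_B, G_F) < log₂ Θ_th) = P(G_B ≤ ε1) + P(ε1 < G_B < ε0 and G_B < G_F < ε2 G_B/(G_B − ε1)) + P(G_F < G_B and G_B > ε1). -/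
/-!
For `g_B > ε1` the coefficient `ω(g_B)` is below `1` and `1 - ω = (g_B - ε1) / (g_B Θ_B)`. In the
first SIC stage (`g_F > g_B`) the outage condition `1 + ω̄ ρ g_F < Θ_th` is therefore linear in
`g_F`, namely `g_F (g_B - ε1) < ε2 g_B`, and together with `g_B < g_F` it forces `g_B < ε0`. In
the second stage the SINR stays below `ω̄ / ω < 1 / (Θ_B - 1) < Θ_th - 1`, so the grant-free user
is always in outage. The configurations left out, `g_F ≤ 0` and `g_F = g_B`, are null: `G_F` is
Gamma distributed, hence positive and atomless, and it is independent of `G_B`.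
-/

open MeasureTheory ProbabilityTheory

/-- The FPA power allocation coefficient of the grant-based user:
ω(g_B) = min{(ρg_B + 1)(Θ_B − 1)/(ρg_B Θ_B), 1}. -/
noncomputable def omegaFPA (ρ ΘB gB : ℝ) : ℝ :=
  min ((ρ * gB + 1) * (ΘB - 1) / (ρ * gB * ΘB)) 1

/-- The grant-free achievable rate under the FPA scheme: with ω = ω(g_B) and ω̄ = 1 − ω,
R_F(g_B, g_F) = log₂(1 + ω̄ρg_F) if g_F > g_B (first-stage SIC) and
R_F(g_B, g_F) = log₂(1 + ω̄ρg_F/(1 + ωρg_F)) if g_F ≤ g_B (second-stage SIC). -/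
noncomputable def rateF (ρ ΘB gB gF : ℝ) : ℝ :=
  if gB < gF then Real.logb 2 (1 + (1 - omegaFPA ρ ΘB gB) * ρ * gF)
  else Real.logb 2 (1 + (1 - omegaFPA ρ ΘB gB) * ρ * gF / (1 + omegaFPA ρ ΘB gB * ρ * gF))

instance (m : ℕ) (l : ℝ) : NullSingletonClass (gammaLaw m l) := by
  unfold gammaLaw; infer_instance

theorem ae_pos_gammaLaw (m : ℕ) (l : ℝ) : ∀ᵐ x ∂gammaLaw m l, 0 < x := by
  rw [gammaLaw, ae_withDensity_iff
    (Measurable.ite measurableSet_Ioi (by fun_prop) measurable_const).ennreal_ofReal]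
  refine Filter.Eventually.of_forall fun x hx => ?_
  by_contra h
  simp [h] at hx

theorem ProbabilityTheory.IndepFun.ae_ne {Ω β : Type*} [MeasurableSpace Ω] {P : Measure Ω}
    [IsFiniteMeasure P] [MeasurableSpace β] [MeasurableEq β]
    {X Y : Ω → β} (hXY : IndepFun X Y P) (hX : AEMeasurable X P) (hY : AEMeasurable Y P)
    [NullSingletonClass (P.map Y)] : ∀ᵐ ω ∂P, X ω ≠ Y ω := by
  have hdiag : MeasurableSet {p : β × β | p.1 = p.2} :=
    measurableSet_eq_fun measurable_fst measurable_snd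
  rw [ae_iff]
  simp only [ne_eq, not_not]
  change P ((fun ω => (X ω, Y ω)) ⁻¹' {p | p.1 = p.2}) = 0
  rw [← Measure.map_apply_of_aemeasurable (hX.prodMk hY) hdiag,
    (indepFun_iff_map_prod_eq_prod_map_map hX hY).mp hXY, Measure.prod_apply hdiag]
  simp

section FPA

variable {ρ ΘB Θth ε1 ε2 b f : ℝ}

theorem div_lt_omegaFPA (hρ : 0 < ρ) (hΘB : 1 < ΘB) (hb : 0 < b) :
    (ΘB - 1) / ΘB < omegaFPA ρ ΘB b := by
  have hΘB0 : 0 < ΘB := by linarith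
  refine lt_min ?_ ((div_lt_one hΘB0).mpr (by linarith))
  rw [div_lt_div_iff₀ hΘB0 (by positivity)]
  nlinarith [mul_pos (mul_pos hΘB0 hΘB0) (sub_pos.mpr hΘB)]

theorem one_sub_omegaFPA (hρ : 0 < ρ) (hΘB : 1 < ΘB) (hb : (ΘB - 1) / ρ < b) :
    1 - omegaFPA ρ ΘB b = (b - (ΘB - 1) / ρ) / (b * ΘB) := by
  have hb0 : 0 < b := (div_pos (sub_pos.mpr hΘB) hρ).trans hb
  have hlt : (ρ * b + 1) * (ΘB - 1) / (ρ * b * ΘB) < 1 := by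
    rw [div_lt_one (by positivity)]
    nlinarith [(div_lt_iff₀ hρ).mp hb]
  rw [omegaFPA, min_eq_left hlt.le]
  field_simp
  ring

theorem rateF_lt_logb_of_le (hρ : 0 < ρ) (hΘB : 1 < ΘB) (hth : ΘB / (ΘB - 1) < Θth)
    (hb : 0 < b) (hf : 0 ≤ f) (hfb : f ≤ b) : rateF ρ ΘB b f < Real.logb 2 Θth := by
  set ω := omegaFPA ρ ΘB b
  have hω : (ΘB - 1) / ΘB < ω := div_lt_omegaFPA hρ hΘB hb
  have hω1 : ω ≤ 1 := min_le_right _ _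
  have hΘB1 : 0 < ΘB - 1 := sub_pos.mpr hΘB
  have hω0 : 0 < ω := (div_pos hΘB1 (by linarith)).trans hω
  set x := ρ * f
  have hx : 0 ≤ x := mul_nonneg hρ.le hf
  have hsinr : (1 - ω) * x / (1 + ω * x) ≤ (1 - ω) / ω := by
    rw [div_le_div_iff₀ (by positivity) hω0]
    nlinarith [mul_nonneg (sub_nonneg.mpr hω1) hx]
  have hinterf : (1 - ω) / ω < 1 / (ΘB - 1) := by
    rw [div_lt_div_iff₀ hω0 hΘB1]
    rw [div_lt_iff₀ (by linarith)] at hω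
    linarith
  have hth' : 1 / (ΘB - 1) < Θth - 1 := by
    rw [show ΘB / (ΘB - 1) = 1 + 1 / (ΘB - 1) by field_simp; ring] at hth
    linarith
  have hsinr0 : 0 ≤ (1 - ω) * x / (1 + ω * x) := by
    have := sub_nonneg.mpr hω1
    positivity
  rw [rateF, if_neg (not_lt.mpr hfb), mul_assoc (1 - ω), mul_assoc ω,
    Real.logb_lt_logb_iff one_lt_two (by linarith) (by linarith)]
  linarith

theorem rateF_lt_logb_iff_of_lt (hρ : 0 < ρ) (hΘB : 1 < ΘB) (hΘth : 0 < Θth)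
    (hε1 : ε1 = (ΘB - 1) / ρ) (hε2 : ε2 = ΘB * (Θth - 1) / ρ) (hb : ε1 < b) (hbf : b < f) :
    rateF ρ ΘB b f < Real.logb 2 Θth ↔ f * (b - ε1) < ε2 * b := by
  subst hε1 hε2
  have hb0 : 0 < b := (div_pos (sub_pos.mpr hΘB) hρ).trans hb
  have hf0 : 0 < f := hb0.trans hbf
  have hsinr : 1 + (1 - omegaFPA ρ ΘB b) * ρ * f - Θth
      = ρ / (b * ΘB) * (f * (b - (ΘB - 1) / ρ) - ΘB * (Θth - 1) / ρ * b) := by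
    rw [one_sub_omegaFPA hρ hΘB hb]
    field_simp
    ring
  have hpos : 0 < 1 + (1 - omegaFPA ρ ΘB b) * ρ * f := by
    rw [one_sub_omegaFPA hρ hΘB hb]
    have : 0 < b - (ΘB - 1) / ρ := sub_pos.mpr hb
    have : 0 < ΘB := by linarith
    positivity
  rw [rateF, if_pos hbf, Real.logb_lt_logb_iff one_lt_two hpos hΘth, ← sub_neg, hsinr,
    ← smul_eq_mul, smul_neg_iff_of_pos_left (by positivity : 0 < ρ / (b * ΘB)), sub_neg]

theorem rateF_lt_logb_iff (hρ : 0 < ρ) (hΘB : 1 < ΘB) (hth : ΘB / (ΘB - 1) < Θth)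
    (hε1 : ε1 = (ΘB - 1) / ρ) (hε2 : ε2 = ΘB * (Θth - 1) / ρ) (hb : ε1 < b) (hf : 0 ≤ f)
    (hne : b ≠ f) :
    rateF ρ ΘB b f < Real.logb 2 Θth ↔
      (b < ε1 + ε2 ∧ b < f ∧ f < ε2 * b / (b - ε1)) ∨ f < b := by
  have hb0 : 0 < b := (hε1 ▸ div_pos (sub_pos.mpr hΘB) hρ).trans hb
  rcases hne.lt_or_gt with hbf | hfb
  · have hΘth : 0 < Θth := (div_pos (by linarith) (sub_pos.mpr hΘB)).trans hth
    rw [rateF_lt_logb_iff_of_lt hρ hΘB hΘth hε1 hε2 hb hbf, ← lt_div_iff₀ (sub_pos.mpr hb)]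
    refine ⟨fun h => Or.inl ⟨?_, hbf, h⟩, ?_⟩
    · rw [lt_div_iff₀ (sub_pos.mpr hb)] at h
      nlinarith
    · rintro (⟨-, -, h⟩ | hfb)
      exacts [h, absurd hbf hfb.not_gt]
  · exact iff_of_true (rateF_lt_logb_of_le hρ hΘB hth hb0 hf hfb.le) (Or.inr hfb)

end FPA

theorem stmt_16_general {Ω : Type*} [MeasurableSpace Ω] (P : Measure Ω) [IsProbabilityMeasure P]
    (m : ℕ) (lF : ℝ)
    (GB GF : Ω → ℝ) (hGB : Measurable GB) (hGF : Measurable GF)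
    (hFlaw : P.map GF = gammaLaw m lF)
    (hindep : IndepFun GB GF P)
    (ρ ΘB Θth : ℝ) (hρ : 0 < ρ) (hΘB : 1 < ΘB) (hth : ΘB / (ΘB - 1) < Θth)
    (ε1 ε2 ε0 : ℝ)
    (hε1 : ε1 = (ΘB - 1) / ρ) (hε2 : ε2 = ΘB * (Θth - 1) / ρ) (hε0 : ε0 = ε1 + ε2) :
    P {ω | GB ω ≤ ε1} +
        P {ω | ε1 < GB ω ∧ rateF ρ ΘB (GB ω) (GF ω) < Real.logb 2 Θth} =
      P {ω | GB ω ≤ ε1} +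
        P {ω | ε1 < GB ω ∧ GB ω < ε0 ∧ GB ω < GF ω ∧ GF ω < ε2 * GB ω / (GB ω - ε1)} +
        P {ω | GF ω < GB ω ∧ ε1 < GB ω} := by
  subst hε0
  set E₂ := {ω | ε1 < GB ω ∧ GB ω < ε1 + ε2 ∧ GB ω < GF ω ∧ GF ω < ε2 * GB ω / (GB ω - ε1)}
  set E₃ := {ω | GF ω < GB ω ∧ ε1 < GB ω}
  have hGF_pos : ∀ᵐ ω ∂P, 0 < GF ω :=
    ae_of_ae_map hGF.aemeasurable (hFlaw ▸ ae_pos_gammaLaw m lF)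
  have : NullSingletonClass (P.map GF) := hFlaw ▸ inferInstance
  have hae : {ω | ε1 < GB ω ∧ rateF ρ ΘB (GB ω) (GF ω) < Real.logb 2 Θth} =ᵐ[P]
      (E₂ ∪ E₃ : Set Ω) := by
    filter_upwards [hGF_pos, hindep.ae_ne hGB.aemeasurable hGF.aemeasurable] with ω hf hne
    refine propext (?_ : _ ∧ _ ↔ (_ ∧ _) ∨ (_ ∧ _))
    by_cases hb : ε1 < GB ω
    · rw [rateF_lt_logb_iff hρ hΘB hth hε1 hε2 hb hf.le hne]
      tauto
    · simp only [hb, false_and, and_false, or_self]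
  have hdisj : Disjoint E₂ E₃ :=
    Set.disjoint_left.mpr fun ω h1 h2 => h1.2.2.1.not_gt h2.1
  rw [measure_congr hae, measure_union hdisj
    ((measurableSet_lt hGF hGB).inter (measurableSet_lt measurable_const hGB)), add_assoc]

/-- exact FPA outage probability decomposition in the case
Θ_th > Θ_B/(Θ_B − 1) (Theorem 1 of the paper):
P(G_B ≤ ε1) + P(G_B > ε1, R_F(G_B,G_F) < log₂ Θ_th)
 = P(G_B ≤ ε1) + P(ε1 < G_B < ε0, G_B < G_F < ε2 G_B/(G_B − ε1)) + P(G_F < G_B, G_B > ε1). -/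
theorem stmt_16 {Ω : Type*} [MeasurableSpace Ω] (P : Measure Ω) [IsProbabilityMeasure P]
    (m : ℕ) (hm : 1 ≤ m) (lB lF : ℝ) (hlB : 0 < lB) (hlF : 0 < lF)
    (GB GF : Ω → ℝ) (hGB : Measurable GB) (hGF : Measurable GF)
    (hBlaw : P.map GB = gammaLaw m lB) (hFlaw : P.map GF = gammaLaw m lF)
    (hindep : IndepFun GB GF P)
    (ρ ΘB Θth : ℝ) (hρ : 0 < ρ) (hΘB : 1 < ΘB) (hth : ΘB / (ΘB - 1) < Θth)
    (ε1 ε2 ε0 : ℝ)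
    (hε1 : ε1 = (ΘB - 1) / ρ) (hε2 : ε2 = ΘB * (Θth - 1) / ρ) (hε0 : ε0 = ε1 + ε2) :
    P {ω | GB ω ≤ ε1} +
        P {ω | ε1 < GB ω ∧ rateF ρ ΘB (GB ω) (GF ω) < Real.logb 2 Θth} =
      P {ω | GB ω ≤ ε1} +
        P {ω | ε1 < GB ω ∧ GB ω < ε0 ∧ GB ω < GF ω ∧ GF ω < ε2 * GB ω / (GB ω - ε1)} +
        P {ω | GF ω < GB ω ∧ ε1 < GB ω} :=
  stmt_16_general P m lF GB GF hGB hGF hFlaw hindep ρ ΘB Θth hρ hΘB hth ε1 ε2 ε0 hε1 hε2 hε0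
end
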